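/- For every weighted digraph Γ having at least one arc (so that n − v ≥ 1), the group inverse of the Kirchhoff matrix satisfies L^# = (σ_{n−v−1}/σ_{n−v})·(J̄_{n−v−1} − J̄); equivalently, the (i,j) entry of L^# equals (ε(F_{n−v−1}^{j→i}) − σ_{n−v−1}·J̄_{ij})/σ_{n−v}, where ε(F_{n−v−1}^{j→i}) is the (i,j) entry of Q_{n−v−1}. -/

import Mathlib

open Matrix BigOperators Filter

/-- An out forest of the weighted digraph with arc-weight matrix `ε`:
a set of arcs (pairs with positive weight), every vertex has at most one
incoming arc, and there is no directed cycle. -/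
def IsOutForest {n : ℕ} (ε : Fin n → Fin n → ℝ) (F : Finset (Fin n × Fin n)) : Prop :=
  (∀ p ∈ F, 0 < ε p.1 p.2) ∧
  (∀ u u' v : Fin n, (u, v) ∈ F → (u', v) ∈ F → u = u') ∧
  ¬ ∃ (k : ℕ) (f : ℕ → Fin n), 0 < k ∧ f 0 = f k ∧ ∀ i < k, (f i, f (i + 1)) ∈ F

/-- The weight of a forest: the product of the weights of its arcs. -/
noncomputable def forestWeight {n : ℕ} (ε : Fin n → Fin n → ℝ)
    (F : Finset (Fin n × Fin n)) : ℝ :=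
  ∏ p ∈ F, ε p.1 p.2

/-- `σ_k`: the total weight of the out forests with exactly `k` arcs. -/
noncomputable def sigmaW {n : ℕ} (ε : Fin n → Fin n → ℝ) (k : ℕ) : ℝ :=
  ∑ᶠ F ∈ {F : Finset (Fin n × Fin n) | IsOutForest ε F ∧ F.card = k}, forestWeight ε F

/-- `Q_k`: the matrix whose `(i,j)` entry is the total weight of out forests with `k`
arcs in which `j` has no incoming arc and `i` is reachable from `j` along arcs of `F`. -/
noncomputable def QMat {n : ℕ} (ε : Fin n → Fin n → ℝ) (k : ℕ) :
    Matrix (Fin n) (Fin n) ℝ :=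
  Matrix.of fun i j =>
    ∑ᶠ F ∈ {F : Finset (Fin n × Fin n) | IsOutForest ε F ∧ F.card = k ∧
        (∀ u, (u, j) ∉ F) ∧ Relation.ReflTransGen (fun a b => (a, b) ∈ F) j i},
      forestWeight ε F

/-- `n − v`: the maximum number of arcs in an out forest. -/
noncomputable def maxForestCard {n : ℕ} (ε : Fin n → Fin n → ℝ) : ℕ :=
  sSup {k | ∃ F : Finset (Fin n × Fin n), IsOutForest ε F ∧ F.card = k}

/-- The Kirchhoff matrix: `l i j = -ε j i` for `j ≠ i`, `l i i = Σ_{k ≠ i} ε k i`. -/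
noncomputable def kirchhoff {n : ℕ} (ε : Fin n → Fin n → ℝ) : Matrix (Fin n) (Fin n) ℝ :=
  Matrix.of fun i j =>
    if i = j then ∑ k ∈ Finset.univ.filter (· ≠ i), ε k i else -(ε j i)

/-- The normalized matrix of maximum out forests `J̄ = σ_{n−v}⁻¹ Q_{n−v}`. -/
noncomputable def Jbar {n : ℕ} (ε : Fin n → Fin n → ℝ) : Matrix (Fin n) (Fin n) ℝ :=
  (sigmaW ε (maxForestCard ε))⁻¹ • QMat ε (maxForestCard ε)


section Graph
variable {n : ℕ}

/-- reachability along arcs of `F` -/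
def reachF {n : ℕ} (F : Finset (Fin n × Fin n)) (a b : Fin n) : Prop :=
  Relation.ReflTransGen (fun x y => (x, y) ∈ F) a b

/-- no directed cycle, stated as in `IsOutForest` -/
def NoCyc {n : ℕ} (F : Finset (Fin n × Fin n)) : Prop :=
  ¬ ∃ (k : ℕ) (f : ℕ → Fin n), 0 < k ∧ f 0 = f k ∧ ∀ i < k, (f i, f (i + 1)) ∈ F

lemma reachF.mono {F G : Finset (Fin n × Fin n)} (h : F ⊆ G) {a b : Fin n}
    (hr : reachF F a b) : reachF G a b :=
  Relation.ReflTransGen.mono (r := fun x y => (x, y) ∈ F) (p := fun x y => (x, y) ∈ G)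
    (fun _ _ hx => h hx) a b hr

lemma exists_walk {F : Finset (Fin n × Fin n)} {a b : Fin n} (h : reachF F a b) :
    ∃ (k : ℕ) (f : ℕ → Fin n), f 0 = a ∧ f k = b ∧ ∀ t < k, (f t, f (t + 1)) ∈ F := by
  induction h with
  | refl => exact ⟨0, fun _ => a, rfl, rfl, fun t ht => absurd ht (Nat.not_lt_zero t)⟩
  | @tail b' c' hac hcb ih =>
    obtain ⟨k, f, h0, hk, harc⟩ := ih
    refine ⟨k + 1, fun t => if t ≤ k then f t else c', ?_, ?_, ?_⟩
    · simp [Nat.zero_le, h0]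
    · simp
    · intro t ht
      rcases Nat.lt_or_ge t k with h1 | h1
      · simpa [Nat.le_of_lt h1, Nat.succ_le_of_lt h1] using harc t h1
      · have : t = k := Nat.le_antisymm (Nat.lt_succ_iff.mp ht) h1
        subst this
        simpa [hk] using hcb

/-- a reach from `a` to `b` plus an arc `(b,a)` produces a cycle -/
lemma cycle_of_reach {F : Finset (Fin n × Fin n)} {a b : Fin n} (h : reachF F a b)
    (hba : (b, a) ∈ F) :
    ∃ (k : ℕ) (f : ℕ → Fin n), 0 < k ∧ f 0 = f k ∧ ∀ i < k, (f i, f (i + 1)) ∈ F := by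
  obtain ⟨k, f, h0, hk, harc⟩ := exists_walk h
  refine ⟨k + 1, fun t => if t = k + 1 then a else f t, Nat.succ_pos k, by simp [h0], ?_⟩
  intro t ht
  rcases Nat.lt_or_ge t k with h1 | h1
  · have ht1 : t ≠ k + 1 := by omega
    have ht2 : t + 1 ≠ k + 1 := by omega
    simpa [ht1, ht2, show t ≠ k by omega] using harc t h1
  · have : t = k := by omega
    subst this
    simpa [Nat.succ_ne_self, hk] using hba

lemma not_reach_of_nocyc {F : Finset (Fin n × Fin n)} (hF : NoCyc F) {a b : Fin n}
    (hba : (b, a) ∈ F) : ¬ reachF F a b := fun h => hF (cycle_of_reach h hba)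

/-- decomposition of reachability after inserting one arc -/
lemma reach_insert_cases {F : Finset (Fin n × Fin n)} {s t x y : Fin n}
    (h : reachF (insert (s, t) F) x y) : reachF F x y ∨ reachF F t y := by
  induction h with
  | refl => exact Or.inl Relation.ReflTransGen.refl
  | @tail z w hxz hzy ih =>
    rcases Finset.mem_insert.mp hzy with he | hm
    · have : w = t := by
        have := (Prod.ext_iff.mp he).2; simpa using this
      subst this; exact Or.inr Relation.ReflTransGen.refl
    · rcases ih with h1 | h1
      · exact Or.inl (h1.tail hm)
      · exact Or.inr (h1.tail hm)

/-- removing an arc `(q,i)` preserves reach to any `y` not reachable from `i` -/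
lemma reach_erase {F : Finset (Fin n × Fin n)} {q i x y : Fin n}
    (h : reachF F x y) (hy : ¬ reachF F i y) : reachF (F.erase (q, i)) x y := by
  induction h with
  | refl => exact Relation.ReflTransGen.refl
  | @tail z w hxz hzy ih =>
    have hwi : w ≠ i := by
      rintro rfl; exact hy Relation.ReflTransGen.refl
    have hne : (z, w) ≠ (q, i) := by
      intro he; exact hwi (Prod.ext_iff.mp he).2
    have hz : ¬ reachF F i z := fun hr => hy (hr.tail hzy)
    exact (ih hz).tail (Finset.mem_erase.mpr ⟨hne, hzy⟩)

/-- ancestors of a common vertex are comparable (needs unique incoming arcs) -/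
lemma reach_comparable {F : Finset (Fin n × Fin n)}
    (hun : ∀ u u' v : Fin n, (u, v) ∈ F → (u', v) ∈ F → u = u')
    {x y z : Fin n} (hxz : reachF F x z) (hyz : reachF F y z) :
    reachF F x y ∨ reachF F y x := by
  induction hxz with
  | refl => exact Or.inr hyz
  | @tail w z' hxw hwz ih =>
    rcases Relation.ReflTransGen.cases_tail hyz with he | ⟨c, hyc, hcz⟩
    · subst he; exact Or.inl (hxw.tail hwz)
    · have : c = w := hun c w z' hcz hwz
      subst this; exact ih hyc

/-- extract the last arc of a nonempty reach -/
lemma reach_last_arc {F : Finset (Fin n × Fin n)} {x y : Fin n} (h : reachF F x y)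
    (hne : y ≠ x) : ∃ s, reachF F x s ∧ (s, y) ∈ F := by
  rcases Relation.ReflTransGen.cases_tail h with he | ⟨c, hc, harc⟩
  · exact absurd he hne
  · exact ⟨c, hc, harc⟩

lemma not_reach_of_no_incoming {F : Finset (Fin n × Fin n)} {x y : Fin n}
    (hno : ∀ u, (u, y) ∉ F) (hne : y ≠ x) : ¬ reachF F x y := by
  intro h
  obtain ⟨s, _, harc⟩ := reach_last_arc h hne
  exact hno s harc


lemma walk_reach {F : Finset (Fin n × Fin n)} {k : ℕ} {f : ℕ → Fin n}
    (harc : ∀ t < k, (f t, f (t + 1)) ∈ F) {a b : ℕ} (hab : a ≤ b) (hbk : b ≤ k) :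
    reachF F (f a) (f b) := by
  induction b with
  | zero => have : a = 0 := Nat.le_zero.mp hab; subst this; exact Relation.ReflTransGen.refl
  | succ m ih =>
    rcases Nat.lt_or_ge a (m+1) with h1 | h1
    · have h2 : a ≤ m := Nat.lt_succ_iff.mp h1
      exact (ih h2 (Nat.le_of_succ_le hbk)).tail (harc m (Nat.lt_of_succ_le hbk))
    · have : a = m + 1 := Nat.le_antisymm hab h1
      subst this; exact Relation.ReflTransGen.refl

/-- if inserting `(s,i)` into an acyclic `F` creates a cycle, then `i` reaches `s` in `F` -/
lemma reach_of_cycle_insert {F : Finset (Fin n × Fin n)} {s i : Fin n}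
    (hF : NoCyc F)
    {k : ℕ} {f : ℕ → Fin n} (hk : 0 < k) (hcyc : f 0 = f k)
    (harc : ∀ t < k, (f t, f (t + 1)) ∈ insert (s, i) F) :
    reachF F i s := by
  by_cases hall : ∀ t < k, (f t, f (t + 1)) ∈ F
  · exact absurd ⟨k, f, hk, hcyc, hall⟩ hF
  · push_neg at hall
    obtain ⟨m, hm, hnot⟩ := hall
    have heq : (f m, f (m + 1)) = (s, i) := by
      rcases Finset.mem_insert.mp (harc m hm) with h | h
      · exact h
      · exact absurd h hnot
    have hfm : f m = s := (Prod.ext_iff.mp heq).1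
    have hfm1 : f (m + 1) = i := (Prod.ext_iff.mp heq).2
    have h1 : reachF (insert (s, i) F) (f (m + 1)) (f k) :=
      walk_reach harc (Nat.succ_le_of_lt hm) (le_refl k)
    have h2 : reachF (insert (s, i) F) (f 0) (f m) :=
      walk_reach harc (Nat.zero_le m) (le_of_lt hm)
    have h3 : reachF (insert (s, i) F) i s := by
      have := h1.trans (hcyc ▸ h2)
      rwa [hfm1, hfm] at this
    rcases reach_insert_cases h3 with h | h
    · exact h
    · exact h

end Graph

section Forest
variable {n : ℕ} {ε : Fin n → Fin n → ℝ}

lemma IsOutForest.nocyc {F : Finset (Fin n × Fin n)} (h : IsOutForest ε F) : NoCyc F := h.2.2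
lemma IsOutForest.uniq {F : Finset (Fin n × Fin n)} (h : IsOutForest ε F) :
    ∀ u u' v : Fin n, (u, v) ∈ F → (u', v) ∈ F → u = u' := h.2.1
lemma IsOutForest.pos {F : Finset (Fin n × Fin n)} (h : IsOutForest ε F) :
    ∀ p ∈ F, 0 < ε p.1 p.2 := h.1

lemma IsOutForest.subset {F G : Finset (Fin n × Fin n)} (hG : IsOutForest ε G) (h : F ⊆ G) :
    IsOutForest ε F := by
  refine ⟨fun p hp => hG.pos p (h hp), fun u u' v hu hu' => hG.uniq u u' v (h hu) (h hu'), ?_⟩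
  rintro ⟨k, f, hk, h0, harc⟩
  exact hG.nocyc ⟨k, f, hk, h0, fun t ht => h (harc t ht)⟩

lemma IsOutForest.empty : IsOutForest ε (∅ : Finset (Fin n × Fin n)) := by
  refine ⟨by simp, by simp, ?_⟩
  rintro ⟨k, f, hk, h0, harc⟩
  exact absurd (harc 0 hk) (by simp)

lemma arc_ne {F : Finset (Fin n × Fin n)} (hF : IsOutForest ε F)
    (hdiag : ∀ i, ε i i = 0) {u v : Fin n} (h : (u, v) ∈ F) : u ≠ v := by
  intro he
  have := hF.pos _ h
  rw [he, hdiag] at this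
  exact lt_irrefl 0 this

lemma IsOutForest.insert_arc {F : Finset (Fin n × Fin n)} {s i : Fin n}
    (hF : IsOutForest ε F) (hno : ∀ u, (u, i) ∉ F) (hpos : 0 < ε s i)
    (hreach : ¬ reachF F i s) : IsOutForest ε (insert (s, i) F) := by
  refine ⟨?_, ?_, ?_⟩
  · intro p hp
    rcases Finset.mem_insert.mp hp with h | h
    · subst h; exact hpos
    · exact hF.pos p h
  · intro u u' v hu hu'
    rcases Finset.mem_insert.mp hu with h | h <;> rcases Finset.mem_insert.mp hu' with h' | h'
    · have h1 : u = s ∧ v = i := by simpa using h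
      have h2 : u' = s ∧ v = i := by simpa using h'
      rw [h1.1, h2.1]
    · have h1 : u = s ∧ v = i := by simpa using h
      rw [h1.2] at h'
      exact absurd h' (hno u')
    · have h1 : u' = s ∧ v = i := by simpa using h'
      rw [h1.2] at h
      exact absurd h (hno u)
    · exact hF.uniq u u' v h h'
  · rintro ⟨k, f, hk, h0, harc⟩
    exact hreach (reach_of_cycle_insert hF.nocyc hk h0 harc)

/-- the (unique) in-neighbour of `v`, if any -/
noncomputable def par {n : ℕ} (F : Finset (Fin n × Fin n)) (v : Fin n) : Fin n :=
  if h : ∃ u, (u, v) ∈ F then h.choose else v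

lemma par_mem {F : Finset (Fin n × Fin n)} {v : Fin n} (h : ∃ u, (u, v) ∈ F) :
    (par F v, v) ∈ F := by
  rw [par, dif_pos h]; exact h.choose_spec

lemma par_eq {F : Finset (Fin n × Fin n)}
    (hun : ∀ u u' v : Fin n, (u, v) ∈ F → (u', v) ∈ F → u = u')
    {u v : Fin n} (h : (u, v) ∈ F) : par F v = u :=
  hun _ _ _ (par_mem ⟨u, h⟩) h

lemma reach_empty {a b : Fin n} (h : reachF (∅ : Finset (Fin n × Fin n)) a b) : a = b := by
  rcases Relation.ReflTransGen.cases_tail h with he | ⟨c, _, harc⟩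
  · exact he.symm
  · exact absurd harc (by simp)

end Forest

section Sums
open Finset
variable {n : ℕ} {ε : Fin n → Fin n → ℝ}

/-- sum of `f` over all elements satisfying `P` (with a fixed classical instance) -/
noncomputable def csum {α : Type*} [Fintype α] (P : α → Prop) (f : α → ℝ) : ℝ :=
  ∑ a ∈ @Finset.filter α P (fun a => Classical.propDecidable (P a)) Finset.univ, f a

lemma csum_congr_iff {α : Type*} [Fintype α] (X Y : α → Prop) (f : α → ℝ)
    (h : ∀ a, X a ↔ Y a) : csum X f = csum Y f := by
  simp only [csum]
  apply Finset.sum_congr _ (fun _ _ => rfl)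
  ext a
  simp only [Finset.mem_filter, Finset.mem_univ, true_and]
  exact h a

lemma csum_split {α : Type*} [Fintype α] (X Y : α → Prop) (f : α → ℝ) :
    csum X f = csum (fun a => X a ∧ Y a) f + csum (fun a => X a ∧ ¬ Y a) f := by
  classical
  simp only [csum]
  rw [← Finset.sum_filter_add_sum_filter_not
    (@Finset.filter _ X (fun a => Classical.propDecidable (X a)) Finset.univ) Y f]
  congr 1
  · apply Finset.sum_congr _ (fun _ _ => rfl)
    ext a
    simp only [Finset.mem_filter, Finset.mem_univ, true_and]
  · apply Finset.sum_congr _ (fun _ _ => rfl)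
    ext a
    simp only [Finset.mem_filter, Finset.mem_univ, true_and]

lemma csum_drop_eps {α : Type*} [Fintype α] (X : α → Prop) (g e : α → ℝ)
    (he : ∀ a, 0 ≤ e a) :
    csum X (fun a => e a * g a) = csum (fun a => X a ∧ 0 < e a) (fun a => e a * g a) := by
  classical
  rw [csum_split X (fun a => 0 < e a) (fun a => e a * g a)]
  have : csum (fun a => X a ∧ ¬ 0 < e a) (fun a => e a * g a) = 0 := by
    rw [csum]
    apply Finset.sum_eq_zero
    intro a ha
    simp only [Finset.mem_filter] at ha
    have : e a = 0 := le_antisymm (not_lt.mp ha.2.2) (he a)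
    rw [this, zero_mul]
  rw [this, add_zero]

lemma csum_nonneg {α : Type*} [Fintype α] (X : α → Prop) (f : α → ℝ)
    (hf : ∀ a, X a → 0 ≤ f a) : 0 ≤ csum X f := by
  classical
  rw [csum]
  apply Finset.sum_nonneg
  intro a ha
  simp only [Finset.mem_filter] at ha
  exact hf a ha.2

lemma csum_pos {α : Type*} [Fintype α] (X : α → Prop) (f : α → ℝ)
    (hf : ∀ a, X a → 0 < f a) {a₀ : α} (ha₀ : X a₀) : 0 < csum X f := by
  classical
  rw [csum]
  apply Finset.sum_pos'
  · intro a ha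
    simp only [Finset.mem_filter] at ha
    exact le_of_lt (hf a ha.2)
  · refine ⟨a₀, ?_, hf a₀ ha₀⟩
    simp only [Finset.mem_filter]
    exact ⟨Finset.mem_univ _, ha₀⟩

lemma csum_empty {α : Type*} [Fintype α] (X : α → Prop) (f : α → ℝ)
    (h : ∀ a, ¬ X a) : csum X f = 0 := by
  classical
  rw [csum]
  apply Finset.sum_eq_zero
  intro a ha
  simp only [Finset.mem_filter] at ha
  exact absurd ha.2 (h a)

lemma sigmaW_eq_sum (k : ℕ) :
    sigmaW ε k = csum (fun F => IsOutForest ε F ∧ F.card = k) (forestWeight ε) := by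
  rw [sigmaW, csum]
  have h : {F : Finset (Fin n × Fin n) | IsOutForest ε F ∧ F.card = k}
      = ↑(@Finset.filter _ (fun F => IsOutForest ε F ∧ F.card = k)
          (fun a => Classical.propDecidable _) Finset.univ) := by
    ext F; simp
  rw [h, finsum_mem_coe_finset]

lemma QMat_apply (k : ℕ) (i j : Fin n) :
    QMat ε k i j = csum (fun F => IsOutForest ε F ∧ F.card = k ∧
      (∀ u, (u, j) ∉ F) ∧ reachF F j i) (forestWeight ε) := by
  show (∑ᶠ F ∈ {F : Finset (Fin n × Fin n) | IsOutForest ε F ∧ F.card = k ∧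
        (∀ u, (u, j) ∉ F) ∧ Relation.ReflTransGen (fun a b => (a, b) ∈ F) j i},
      forestWeight ε F) = _
  rw [csum]
  have h : {F : Finset (Fin n × Fin n) | IsOutForest ε F ∧ F.card = k ∧
        (∀ u, (u, j) ∉ F) ∧ Relation.ReflTransGen (fun a b => (a, b) ∈ F) j i}
      = ↑(@Finset.filter _ (fun F => IsOutForest ε F ∧ F.card = k ∧
      (∀ u, (u, j) ∉ F) ∧ reachF F j i) (fun a => Classical.propDecidable _)
        Finset.univ) := by
    ext F; simp only [Finset.mem_coe, Finset.mem_filter, Finset.mem_univ, true_and]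
    simp only [Set.mem_setOf_eq, reachF]
  rw [h, finsum_mem_coe_finset]

lemma pair_sum (i : Fin n) (C : Fin n → Finset (Fin n × Fin n) → Prop) :
    ∑ s ∈ univ.erase i, ε s i * csum (fun F => C s F) (forestWeight ε)
      = csum (fun p : Fin n × Finset (Fin n × Fin n) => p.1 ≠ i ∧ C p.1 p.2)
          (fun p => ε p.1 i * forestWeight ε p.2) := by
  classical
  simp only [csum]
  rw [Finset.sum_filter, Fintype.sum_prod_type]
  have herase : univ.erase i
      = @Finset.filter _ (fun s : Fin n => s ≠ i)
          (fun a => Classical.propDecidable _) Finset.univ := by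
    ext a; simp
  rw [herase, Finset.sum_filter]
  apply Finset.sum_congr rfl
  intro s _
  by_cases hs : s ≠ i
  · simp only [hs, if_true, ne_eq, not_false_eq_true, true_and, Finset.mul_sum,
      Finset.sum_filter]
    apply Finset.sum_congr rfl
    intro F _
    by_cases hC : C s F <;> simp [hC]
  · simp only [hs, if_false, false_and]
    simp [hs]

end Sums

section Bij
open Finset
open scoped Classical
variable {n : ℕ} {ε : Fin n → Fin n → ℝ}

/-- Bijection 1: adding the marked arc `(s,i)` to a forest rooted at `j` that reaches `s`
but not `i`, with `i` having no incoming arc, produces the `(k+1)`-arc forests counted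
in `Q_{k+1} i j`. -/
lemma bij_add (hdiag : ∀ i, ε i i = 0) (k : ℕ) {i j : Fin n} (hij : i ≠ j) :
    csum (fun p : Fin n × Finset (Fin n × Fin n) =>
        IsOutForest ε p.2 ∧ p.2.card = k ∧ (∀ u, (u, j) ∉ p.2) ∧
        reachF p.2 j p.1 ∧ ¬ reachF p.2 j i ∧ (∀ u, (u, i) ∉ p.2) ∧ 0 < ε p.1 i)
      (fun p => ε p.1 i * forestWeight ε p.2)
    = csum (fun F => IsOutForest ε F ∧ F.card = k + 1 ∧
        (∀ u, (u, j) ∉ F) ∧ reachF F j i) (forestWeight ε) := by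
  rw [csum, csum]
  apply Finset.sum_nbij' (fun p => insert (p.1, i) p.2)
    (fun F => (par F i, F.erase (par F i, i)))
  · rintro ⟨s, F⟩ hp
    simp only [Finset.mem_filter, Finset.mem_univ, true_and] at hp ⊢
    obtain ⟨hOF, hcard, hrootj, hB, hnA, hnoinc, hpos⟩ := hp
    have hnotmem : (s, i) ∉ F := hnoinc s
    have hnis : ¬ reachF F i s := by
      intro h
      rcases reach_comparable hOF.uniq h hB with h1 | h1
      · exact not_reach_of_no_incoming hrootj hij.symm h1
      · exact hnA h1
    have hOF' : IsOutForest ε (insert (s, i) F) := hOF.insert_arc hnoinc hpos hnis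
    refine ⟨hOF', ?_, ?_, ?_⟩
    · rw [Finset.card_insert_of_notMem hnotmem, hcard]
    · intro u hu
      rcases Finset.mem_insert.mp hu with h | h
      · have : u = s ∧ j = i := by simpa using h
        exact hij this.2.symm
      · exact hrootj u h
    · exact (hB.mono (Finset.subset_insert _ _)).tail (Finset.mem_insert_self _ _)
  · intro F hF
    simp only [Finset.mem_filter, Finset.mem_univ, true_and] at hF ⊢
    obtain ⟨hOF, hcard, hrootj, hreach⟩ := hF
    obtain ⟨s₀, hjs₀, hs₀i⟩ := reach_last_arc hreach hij
    have hq : (par F i, i) ∈ F := par_mem ⟨s₀, hs₀i⟩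
    have hqs₀ : par F i = s₀ := par_eq hOF.uniq hs₀i
    have hnoincE : ∀ u, (u, i) ∉ F.erase (par F i, i) := by
      intro u hu
      obtain ⟨hne, hmemF⟩ := Finset.mem_erase.mp hu
      exact hne (by rw [hOF.uniq u (par F i) i hmemF hq])
    refine ⟨hOF.subset (Finset.erase_subset _ _), ?_, ?_, ?_, ?_, hnoincE, hOF.pos _ hq⟩
    · rw [Finset.card_erase_of_mem hq, hcard]; omega
    · intro u hu
      exact hrootj u (Finset.mem_of_mem_erase hu)
    · exact reach_erase (hqs₀ ▸ hjs₀) (not_reach_of_nocyc hOF.nocyc hq)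
    · exact not_reach_of_no_incoming hnoincE hij
  · rintro ⟨s, F⟩ hp
    simp only [Finset.mem_filter, Finset.mem_univ, true_and] at hp
    obtain ⟨hOF, hcard, hrootj, hB, hnA, hnoinc, hpos⟩ := hp
    have hnotmem : (s, i) ∉ F := hnoinc s
    have hnis : ¬ reachF F i s := by
      intro h
      rcases reach_comparable hOF.uniq h hB with h1 | h1
      · exact not_reach_of_no_incoming hrootj hij.symm h1
      · exact hnA h1
    have hOF' : IsOutForest ε (insert (s, i) F) := hOF.insert_arc hnoinc hpos hnis
    have hpar : par (insert (s, i) F) i = s :=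
      par_eq hOF'.uniq (Finset.mem_insert_self _ _)
    simp only [hpar, Finset.erase_insert hnotmem]
  · intro F hF
    simp only [Finset.mem_filter, Finset.mem_univ, true_and] at hF
    obtain ⟨hOF, hcard, hrootj, hreach⟩ := hF
    obtain ⟨s₀, hjs₀, hs₀i⟩ := reach_last_arc hreach hij
    have hq : (par F i, i) ∈ F := par_mem ⟨s₀, hs₀i⟩
    exact Finset.insert_erase hq
  · rintro ⟨s, F⟩ hp
    simp only [Finset.mem_filter, Finset.mem_univ, true_and] at hp
    have hnotmem : (s, i) ∉ F := hp.2.2.2.2.2.1 s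
    rw [forestWeight, forestWeight, Finset.prod_insert hnotmem]

/-- Bijection 3 (diagonal case): attaching a marked arc `(s,j)` to a forest rooted at `j`
that does not reach `s` produces the `(k+1)`-arc forests in which `j` has an incoming
arc. -/
lemma bij_diag (hdiag : ∀ i, ε i i = 0) (k : ℕ) (j : Fin n) :
    csum (fun p : Fin n × Finset (Fin n × Fin n) =>
        IsOutForest ε p.2 ∧ p.2.card = k ∧ (∀ u, (u, j) ∉ p.2) ∧
        ¬ reachF p.2 j p.1 ∧ 0 < ε p.1 j)
      (fun p => ε p.1 j * forestWeight ε p.2)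
    = csum (fun F => IsOutForest ε F ∧ F.card = k + 1 ∧
        ∃ u, (u, j) ∈ F) (forestWeight ε) := by
  rw [csum, csum]
  apply Finset.sum_nbij' (fun p => insert (p.1, j) p.2)
    (fun F => (par F j, F.erase (par F j, j)))
  · rintro ⟨s, F⟩ hp
    simp only [Finset.mem_filter, Finset.mem_univ, true_and] at hp ⊢
    obtain ⟨hOF, hcard, hrootj, hnB, hpos⟩ := hp
    have hnotmem : (s, j) ∉ F := hrootj s
    have hOF' : IsOutForest ε (insert (s, j) F) := hOF.insert_arc hrootj hpos hnB
    exact ⟨hOF', by rw [Finset.card_insert_of_notMem hnotmem, hcard],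
      ⟨s, Finset.mem_insert_self _ _⟩⟩
  · intro F hF
    simp only [Finset.mem_filter, Finset.mem_univ, true_and] at hF ⊢
    obtain ⟨hOF, hcard, u₀, hu₀⟩ := hF
    have hq : (par F j, j) ∈ F := par_mem ⟨u₀, hu₀⟩
    have hrootE : ∀ u, (u, j) ∉ F.erase (par F j, j) := by
      intro u hu
      obtain ⟨hne, hmemF⟩ := Finset.mem_erase.mp hu
      exact hne (by rw [hOF.uniq u (par F j) j hmemF hq])
    refine ⟨hOF.subset (Finset.erase_subset _ _), ?_, hrootE, ?_, hOF.pos _ hq⟩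
    · rw [Finset.card_erase_of_mem hq, hcard]; omega
    · intro h
      exact not_reach_of_nocyc hOF.nocyc hq (h.mono (Finset.erase_subset _ _))
  · rintro ⟨s, F⟩ hp
    simp only [Finset.mem_filter, Finset.mem_univ, true_and] at hp
    obtain ⟨hOF, hcard, hrootj, hnB, hpos⟩ := hp
    have hnotmem : (s, j) ∉ F := hrootj s
    have hOF' : IsOutForest ε (insert (s, j) F) := hOF.insert_arc hrootj hpos hnB
    have hpar : par (insert (s, j) F) j = s :=
      par_eq hOF'.uniq (Finset.mem_insert_self _ _)
    simp only [hpar, Finset.erase_insert hnotmem]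
  · intro F hF
    simp only [Finset.mem_filter, Finset.mem_univ, true_and] at hF
    obtain ⟨hOF, hcard, u₀, hu₀⟩ := hF
    exact Finset.insert_erase (par_mem ⟨u₀, hu₀⟩)
  · rintro ⟨s, F⟩ hp
    simp only [Finset.mem_filter, Finset.mem_univ, true_and] at hp
    have hnotmem : (s, j) ∉ F := hp.2.2.1 s
    rw [forestWeight, forestWeight, Finset.prod_insert hnotmem]

end Bij

section Bij2
open Finset
open scoped Classical
variable {n : ℕ} {ε : Fin n → Fin n → ℝ}

/-- swap the marked arc into `i` with the tree arc into `i` -/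
noncomputable def swapMap {n : ℕ} (i : Fin n) (p : Fin n × Finset (Fin n × Fin n)) :
    Fin n × Finset (Fin n × Fin n) :=
  (par p.2 i, insert (p.1, i) (p.2.erase (par p.2 i, i)))

/-- Bijection 2 (the swap involution). -/
lemma bij_swap (hdiag : ∀ i, ε i i = 0) (k : ℕ) {i j : Fin n} (hij : i ≠ j) :
    csum (fun p : Fin n × Finset (Fin n × Fin n) =>
        IsOutForest ε p.2 ∧ p.2.card = k ∧ (∀ u, (u, j) ∉ p.2) ∧
        reachF p.2 j i ∧ ¬ reachF p.2 j p.1 ∧ 0 < ε p.1 i)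
      (fun p => ε p.1 i * forestWeight ε p.2)
    = csum (fun p : Fin n × Finset (Fin n × Fin n) =>
        IsOutForest ε p.2 ∧ p.2.card = k ∧ (∀ u, (u, j) ∉ p.2) ∧
        reachF p.2 j p.1 ∧ ¬ reachF p.2 j i ∧ (∃ u, (u, i) ∈ p.2) ∧ 0 < ε p.1 i)
      (fun p => ε p.1 i * forestWeight ε p.2) := by
  have key : ∀ s : Fin n, ∀ F : Finset (Fin n × Fin n),
      IsOutForest ε F → (par F i, i) ∈ F → par F i ≠ s → 0 < ε s i →
      ¬ reachF F i s →
      (IsOutForest ε (insert (s, i) (F.erase (par F i, i))) ∧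
       (insert (s, i) (F.erase (par F i, i))).card = F.card ∧
       (∀ u, (u, i) ∉ F.erase (par F i, i)) ∧
       (s, i) ∉ F.erase (par F i, i) ∧
       swapMap i (swapMap i (s, F)) = (s, F) ∧
       ε (par F i) i * forestWeight ε (insert (s, i) (F.erase (par F i, i)))
          = ε s i * forestWeight ε F) := by
    intro s F hOF hq hqns hpos hnis
    set q := par F i with hqdef
    have hnoincE : ∀ u, (u, i) ∉ F.erase (q, i) := by
      intro u hu
      obtain ⟨hne, hmemF⟩ := Finset.mem_erase.mp hu
      exact hne (by rw [hOF.uniq u q i hmemF hq])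
    have hnotmemE : (s, i) ∉ F.erase (q, i) := hnoincE s
    have hnisE : ¬ reachF (F.erase (q, i)) i s :=
      fun h => hnis (h.mono (Finset.erase_subset _ _))
    have hOFE : IsOutForest ε (F.erase (q, i)) := hOF.subset (Finset.erase_subset _ _)
    have hOF' : IsOutForest ε (insert (s, i) (F.erase (q, i))) :=
      hOFE.insert_arc hnoincE hpos hnisE
    have hFpos : 1 ≤ F.card := Finset.card_pos.mpr ⟨_, hq⟩
    have hcard : (insert (s, i) (F.erase (q, i))).card = F.card := by
      rw [Finset.card_insert_of_notMem hnotmemE, Finset.card_erase_of_mem hq]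
      omega
    have hpar' : par (insert (s, i) (F.erase (q, i))) i = s :=
      par_eq hOF'.uniq (Finset.mem_insert_self _ _)
    have hswap : swapMap i (swapMap i (s, F)) = (s, F) := by
      show swapMap i (q, insert (s, i) (F.erase (q, i))) = (s, F)
      rw [swapMap]
      simp only [hpar', Finset.erase_insert hnotmemE]
      rw [Finset.insert_erase hq]
    have hw : ε q i * forestWeight ε (insert (s, i) (F.erase (q, i)))
        = ε s i * forestWeight ε F := by
      rw [forestWeight, forestWeight, Finset.prod_insert hnotmemE,
        ← Finset.mul_prod_erase F _ hq]
      ring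
    exact ⟨hOF', hcard, hnoincE, hnotmemE, hswap, hw⟩
  rw [csum, csum]
  apply Finset.sum_nbij' (swapMap i) (swapMap i)
  · rintro ⟨s, F⟩ hp
    simp only [swapMap, Finset.mem_filter, Finset.mem_univ, true_and] at hp ⊢
    obtain ⟨hOF, hcard, hrootj, hA, hnB, hpos⟩ := hp
    obtain ⟨q₀, hjq₀, hq₀i⟩ := reach_last_arc hA hij
    have hq : (par F i, i) ∈ F := par_mem ⟨q₀, hq₀i⟩
    have hjq : reachF F j (par F i) := by rw [par_eq hOF.uniq hq₀i]; exact hjq₀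
    have hqns : par F i ≠ s := fun he => hnB (he ▸ hjq)
    have hnis : ¬ reachF F i s := fun h => hnB (hA.trans h)
    obtain ⟨hOF', hcard', hnoincE, hnotmemE, -, -⟩ := key s F hOF hq hqns hpos hnis
    refine ⟨hOF', by rw [hcard', hcard], ?_, ?_, ?_, ⟨s, Finset.mem_insert_self _ _⟩,
      hOF.pos _ hq⟩
    · intro u hu
      rcases Finset.mem_insert.mp hu with h | h
      · have : u = s ∧ j = i := by simpa using h
        exact hij this.2.symm
      · exact hrootj u (Finset.mem_of_mem_erase h)
    · exact ((reach_erase hjq (not_reach_of_nocyc hOF.nocyc hq)).mono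
        (Finset.subset_insert _ _))
    · intro h
      obtain ⟨c, hjc, hci⟩ := reach_last_arc h hij
      rcases Finset.mem_insert.mp hci with h1 | h1
      · have hcs : c = s := by simpa using (Prod.ext_iff.mp h1).1
        subst hcs
        rcases reach_insert_cases hjc with h2 | h2
        · exact hnB (h2.mono (Finset.erase_subset _ _))
        · exact hnis (h2.mono (Finset.erase_subset _ _))
      · exact hnoincE c h1
  · rintro ⟨s, F⟩ hp
    simp only [swapMap, Finset.mem_filter, Finset.mem_univ, true_and] at hp ⊢
    obtain ⟨hOF, hcard, hrootj, hB, hnA, hinc, hpos⟩ := hp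
    have hq : (par F i, i) ∈ F := par_mem hinc
    have hqns : par F i ≠ s := by
      intro he
      exact hnA (hB.tail (he ▸ hq))
    have hnis : ¬ reachF F i s := by
      intro h
      rcases reach_comparable hOF.uniq h hB with h1 | h1
      · exact not_reach_of_no_incoming hrootj hij.symm h1
      · exact hnA h1
    obtain ⟨hOF', hcard', hnoincE, hnotmemE, -, -⟩ := key s F hOF hq hqns hpos hnis
    refine ⟨hOF', by rw [hcard', hcard], ?_, ?_, ?_, hOF.pos _ hq⟩
    · intro u hu
      rcases Finset.mem_insert.mp hu with h | h
      · have : u = s ∧ j = i := by simpa using h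
        exact hij this.2.symm
      · exact hrootj u (Finset.mem_of_mem_erase h)
    · exact ((reach_erase hB hnis).mono (Finset.subset_insert _ _)).tail
        (Finset.mem_insert_self _ _)
    · intro h
      rcases reach_insert_cases h with h2 | h2
      · exact hnA ((h2.mono (Finset.erase_subset _ _)).tail hq)
      · exact not_reach_of_nocyc hOF.nocyc hq (h2.mono (Finset.erase_subset _ _))
  · rintro ⟨s, F⟩ hp
    simp only [Finset.mem_filter, Finset.mem_univ, true_and] at hp
    obtain ⟨hOF, hcard, hrootj, hA, hnB, hpos⟩ := hp
    obtain ⟨q₀, hjq₀, hq₀i⟩ := reach_last_arc hA hij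
    have hq : (par F i, i) ∈ F := par_mem ⟨q₀, hq₀i⟩
    have hjq : reachF F j (par F i) := by rw [par_eq hOF.uniq hq₀i]; exact hjq₀
    have hqns : par F i ≠ s := fun he => hnB (he ▸ hjq)
    have hnis : ¬ reachF F i s := fun h => hnB (hA.trans h)
    exact (key s F hOF hq hqns hpos hnis).2.2.2.2.1
  · rintro ⟨s, F⟩ hp
    simp only [Finset.mem_filter, Finset.mem_univ, true_and] at hp
    obtain ⟨hOF, hcard, hrootj, hB, hnA, hinc, hpos⟩ := hp
    have hq : (par F i, i) ∈ F := par_mem hinc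
    have hqns : par F i ≠ s := fun he => hnA (hB.tail (he ▸ hq))
    have hnis : ¬ reachF F i s := by
      intro h
      rcases reach_comparable hOF.uniq h hB with h1 | h1
      · exact not_reach_of_no_incoming hrootj hij.symm h1
      · exact hnA h1
    exact (key s F hOF hq hqns hpos hnis).2.2.2.2.1
  · rintro ⟨s, F⟩ hp
    simp only [Finset.mem_filter, Finset.mem_univ, true_and] at hp
    obtain ⟨hOF, hcard, hrootj, hA, hnB, hpos⟩ := hp
    obtain ⟨q₀, hjq₀, hq₀i⟩ := reach_last_arc hA hij
    have hq : (par F i, i) ∈ F := par_mem ⟨q₀, hq₀i⟩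
    have hjq : reachF F j (par F i) := by rw [par_eq hOF.uniq hq₀i]; exact hjq₀
    have hqns : par F i ≠ s := fun he => hnB (he ▸ hjq)
    have hnis : ¬ reachF F i s := fun h => hnB (hA.trans h)
    exact ((key s F hOF hq hqns hpos hnis).2.2.2.2.2).symm

end Bij2

section KeyRec
open Finset
variable {n : ℕ} {ε : Fin n → Fin n → ℝ}

lemma keyrec (hnonneg : ∀ i j, 0 ≤ ε i j) (hdiag : ∀ i, ε i i = 0) (k : ℕ) :
    kirchhoff ε * QMat ε k
      = sigmaW ε (k + 1) • (1 : Matrix (Fin n) (Fin n) ℝ) - QMat ε (k + 1) := by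
  ext i j
  rw [Matrix.mul_apply, Matrix.sub_apply, Matrix.smul_apply, smul_eq_mul]
  rw [← Finset.add_sum_erase _ _ (Finset.mem_univ i)]
  have hkii : kirchhoff ε i i = ∑ s ∈ univ.erase i, ε s i := by
    rw [kirchhoff, Matrix.of_apply, if_pos rfl, Finset.filter_ne' univ i]
  have hkis : ∀ s ∈ univ.erase i, kirchhoff ε i s * QMat ε k s j
      = -(ε s i * QMat ε k s j) := by
    intro s hs
    have hsne : i ≠ s := fun h => (Finset.mem_erase.mp hs).1 h.symm
    rw [kirchhoff, Matrix.of_apply, if_neg hsne, neg_mul]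
  rw [Finset.sum_congr rfl hkis, Finset.sum_neg_distrib, hkii, Finset.sum_mul]
  have t1 : ∑ s ∈ univ.erase i, ε s i * QMat ε k i j
      = csum (fun p : Fin n × Finset (Fin n × Fin n) => p.1 ≠ i ∧
          (IsOutForest ε p.2 ∧ p.2.card = k ∧ (∀ u, (u, j) ∉ p.2) ∧ reachF p.2 j i))
          (fun p => ε p.1 i * forestWeight ε p.2) := by
    rw [QMat_apply k i j]
    exact pair_sum i (fun _ F => IsOutForest ε F ∧ F.card = k ∧
      (∀ u, (u, j) ∉ F) ∧ reachF F j i)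
  have t2 : ∑ s ∈ univ.erase i, ε s i * QMat ε k s j
      = csum (fun p : Fin n × Finset (Fin n × Fin n) => p.1 ≠ i ∧
          (IsOutForest ε p.2 ∧ p.2.card = k ∧ (∀ u, (u, j) ∉ p.2) ∧ reachF p.2 j p.1))
          (fun p => ε p.1 i * forestWeight ε p.2) := by
    have hs : ∀ s ∈ univ.erase i, ε s i * QMat ε k s j
        = ε s i * csum (fun F => IsOutForest ε F ∧ F.card = k ∧
            (∀ u, (u, j) ∉ F) ∧ reachF F j s) (forestWeight ε) :=
      fun s _ => by rw [QMat_apply k s j]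
    rw [Finset.sum_congr rfl hs]
    exact pair_sum i (fun s F => IsOutForest ε F ∧ F.card = k ∧
      (∀ u, (u, j) ∉ F) ∧ reachF F j s)
  rw [t1, t2, QMat_apply (k + 1) i j, sigmaW_eq_sum (k + 1)]
  have hposne : ∀ p : Fin n × Finset (Fin n × Fin n), 0 < ε p.1 i → p.1 ≠ i := by
    intro p hpos he
    rw [he, hdiag i] at hpos
    exact lt_irrefl 0 hpos
  have hdrop : ∀ X : (Fin n × Finset (Fin n × Fin n)) → Prop,
      csum X (fun p => ε p.1 i * forestWeight ε p.2)
        = csum (fun p => X p ∧ 0 < ε p.1 i) (fun p => ε p.1 i * forestWeight ε p.2) :=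
    fun X => csum_drop_eps X (fun p => forestWeight ε p.2) (fun p => ε p.1 i)
      (fun p => hnonneg p.1 i)
  rcases eq_or_ne i j with rfl | hij
  · -- diagonal case
    rw [Matrix.one_apply_eq, mul_one]
    have e0 : csum (fun p : Fin n × Finset (Fin n × Fin n) => p.1 ≠ i ∧
          (IsOutForest ε p.2 ∧ p.2.card = k ∧ (∀ u, (u, i) ∉ p.2) ∧ reachF p.2 i i))
          (fun p => ε p.1 i * forestWeight ε p.2)
        = csum (fun p : Fin n × Finset (Fin n × Fin n) => p.1 ≠ i ∧
          (IsOutForest ε p.2 ∧ p.2.card = k ∧ (∀ u, (u, i) ∉ p.2)))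
          (fun p => ε p.1 i * forestWeight ε p.2) := by
      apply csum_congr_iff
      intro p
      have : reachF p.2 i i := Relation.ReflTransGen.refl
      tauto
    have e1 : csum (fun p : Fin n × Finset (Fin n × Fin n) => p.1 ≠ i ∧
          (IsOutForest ε p.2 ∧ p.2.card = k ∧ (∀ u, (u, i) ∉ p.2)))
          (fun p => ε p.1 i * forestWeight ε p.2)
        = csum (fun p : Fin n × Finset (Fin n × Fin n) => p.1 ≠ i ∧
            (IsOutForest ε p.2 ∧ p.2.card = k ∧ (∀ u, (u, i) ∉ p.2) ∧ reachF p.2 i p.1))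
            (fun p => ε p.1 i * forestWeight ε p.2)
          + csum (fun p : Fin n × Finset (Fin n × Fin n) =>
              (p.1 ≠ i ∧ (IsOutForest ε p.2 ∧ p.2.card = k ∧ (∀ u, (u, i) ∉ p.2)))
              ∧ ¬ reachF p.2 i p.1)
            (fun p => ε p.1 i * forestWeight ε p.2) := by
      rw [csum_split (fun p : Fin n × Finset (Fin n × Fin n) => p.1 ≠ i ∧
          (IsOutForest ε p.2 ∧ p.2.card = k ∧ (∀ u, (u, i) ∉ p.2)))
        (fun p => reachF p.2 i p.1) (fun p => ε p.1 i * forestWeight ε p.2)]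
      congr 1
      apply csum_congr_iff
      intro p
      tauto
    have e2 : csum (fun p : Fin n × Finset (Fin n × Fin n) =>
          (p.1 ≠ i ∧ (IsOutForest ε p.2 ∧ p.2.card = k ∧ (∀ u, (u, i) ∉ p.2)))
          ∧ ¬ reachF p.2 i p.1)
          (fun p => ε p.1 i * forestWeight ε p.2)
        = csum (fun F => IsOutForest ε F ∧ F.card = k + 1 ∧ ∃ u, (u, i) ∈ F)
            (forestWeight ε) := by
      rw [hdrop]
      rw [← bij_diag hdiag k i]
      apply csum_congr_iff
      intro p
      constructor
      · rintro ⟨⟨⟨-, h2, h3, h4⟩, h5⟩, h6⟩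
        exact ⟨h2, h3, h4, h5, h6⟩
      · rintro ⟨h2, h3, h4, h5, h6⟩
        exact ⟨⟨⟨hposne p h6, h2, h3, h4⟩, h5⟩, h6⟩
    have e3 : csum (fun F : Finset (Fin n × Fin n) => IsOutForest ε F ∧ F.card = k + 1)
          (forestWeight ε)
        = csum (fun F : Finset (Fin n × Fin n) => IsOutForest ε F ∧ F.card = k + 1 ∧
              (∀ u, (u, i) ∉ F) ∧ reachF F i i) (forestWeight ε)
          + csum (fun F : Finset (Fin n × Fin n) => IsOutForest ε F ∧ F.card = k + 1 ∧
              ∃ u, (u, i) ∈ F) (forestWeight ε) := by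
      rw [csum_split (fun F : Finset (Fin n × Fin n) => IsOutForest ε F ∧ F.card = k + 1)
        (fun F => ∀ u, (u, i) ∉ F) (forestWeight ε)]
      congr 1
      · apply csum_congr_iff
        intro F
        have : reachF F i i := Relation.ReflTransGen.refl
        tauto
      · apply csum_congr_iff
        intro F
        simp only [not_forall, not_not]
        tauto
    rw [e0, e1, e2]
    rw [e3]
    ring
  · -- off-diagonal case
    rw [Matrix.one_apply_ne hij, mul_zero, zero_sub]
    have e1 : csum (fun p : Fin n × Finset (Fin n × Fin n) => p.1 ≠ i ∧
          (IsOutForest ε p.2 ∧ p.2.card = k ∧ (∀ u, (u, j) ∉ p.2) ∧ reachF p.2 j i))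
          (fun p => ε p.1 i * forestWeight ε p.2)
        = csum (fun p : Fin n × Finset (Fin n × Fin n) =>
            ((p.1 ≠ i ∧ (IsOutForest ε p.2 ∧ p.2.card = k ∧ (∀ u, (u, j) ∉ p.2)))
              ∧ reachF p.2 j i ∧ reachF p.2 j p.1))
            (fun p => ε p.1 i * forestWeight ε p.2)
          + csum (fun p : Fin n × Finset (Fin n × Fin n) =>
              ((p.1 ≠ i ∧ (IsOutForest ε p.2 ∧ p.2.card = k ∧ (∀ u, (u, j) ∉ p.2)))
                ∧ reachF p.2 j i ∧ ¬ reachF p.2 j p.1))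
            (fun p => ε p.1 i * forestWeight ε p.2) := by
      rw [csum_split (fun p : Fin n × Finset (Fin n × Fin n) => p.1 ≠ i ∧
          (IsOutForest ε p.2 ∧ p.2.card = k ∧ (∀ u, (u, j) ∉ p.2) ∧ reachF p.2 j i))
        (fun p => reachF p.2 j p.1) (fun p => ε p.1 i * forestWeight ε p.2)]
      congr 1
      · apply csum_congr_iff; intro p; tauto
      · apply csum_congr_iff; intro p; tauto
    have e2 : csum (fun p : Fin n × Finset (Fin n × Fin n) => p.1 ≠ i ∧
          (IsOutForest ε p.2 ∧ p.2.card = k ∧ (∀ u, (u, j) ∉ p.2) ∧ reachF p.2 j p.1))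
          (fun p => ε p.1 i * forestWeight ε p.2)
        = csum (fun p : Fin n × Finset (Fin n × Fin n) =>
            ((p.1 ≠ i ∧ (IsOutForest ε p.2 ∧ p.2.card = k ∧ (∀ u, (u, j) ∉ p.2)))
              ∧ reachF p.2 j i ∧ reachF p.2 j p.1))
            (fun p => ε p.1 i * forestWeight ε p.2)
          + csum (fun p : Fin n × Finset (Fin n × Fin n) =>
              ((p.1 ≠ i ∧ (IsOutForest ε p.2 ∧ p.2.card = k ∧ (∀ u, (u, j) ∉ p.2)))
                ∧ reachF p.2 j p.1 ∧ ¬ reachF p.2 j i))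
            (fun p => ε p.1 i * forestWeight ε p.2) := by
      rw [csum_split (fun p : Fin n × Finset (Fin n × Fin n) => p.1 ≠ i ∧
          (IsOutForest ε p.2 ∧ p.2.card = k ∧ (∀ u, (u, j) ∉ p.2) ∧ reachF p.2 j p.1))
        (fun p => reachF p.2 j i) (fun p => ε p.1 i * forestWeight ε p.2)]
      congr 1
      · apply csum_congr_iff; intro p; tauto
      · apply csum_congr_iff; intro p; tauto
    have e4 : csum (fun p : Fin n × Finset (Fin n × Fin n) =>
          ((p.1 ≠ i ∧ (IsOutForest ε p.2 ∧ p.2.card = k ∧ (∀ u, (u, j) ∉ p.2)))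
            ∧ reachF p.2 j p.1 ∧ ¬ reachF p.2 j i))
          (fun p => ε p.1 i * forestWeight ε p.2)
        = csum (fun p : Fin n × Finset (Fin n × Fin n) =>
            (((p.1 ≠ i ∧ (IsOutForest ε p.2 ∧ p.2.card = k ∧ (∀ u, (u, j) ∉ p.2)))
              ∧ reachF p.2 j p.1 ∧ ¬ reachF p.2 j i) ∧ (∃ u, (u, i) ∈ p.2)))
            (fun p => ε p.1 i * forestWeight ε p.2)
          + csum (fun p : Fin n × Finset (Fin n × Fin n) =>
              (((p.1 ≠ i ∧ (IsOutForest ε p.2 ∧ p.2.card = k ∧ (∀ u, (u, j) ∉ p.2)))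
                ∧ reachF p.2 j p.1 ∧ ¬ reachF p.2 j i) ∧ ¬ (∃ u, (u, i) ∈ p.2)))
            (fun p => ε p.1 i * forestWeight ε p.2) :=
      csum_split (fun p : Fin n × Finset (Fin n × Fin n) =>
        ((p.1 ≠ i ∧ (IsOutForest ε p.2 ∧ p.2.card = k ∧ (∀ u, (u, j) ∉ p.2)))
          ∧ reachF p.2 j p.1 ∧ ¬ reachF p.2 j i))
        (fun p => ∃ u, (u, i) ∈ p.2) (fun p => ε p.1 i * forestWeight ε p.2)
    -- the "no incoming at i" part equals Q_{k+1} i j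
    have e5 : csum (fun p : Fin n × Finset (Fin n × Fin n) =>
          (((p.1 ≠ i ∧ (IsOutForest ε p.2 ∧ p.2.card = k ∧ (∀ u, (u, j) ∉ p.2)))
            ∧ reachF p.2 j p.1 ∧ ¬ reachF p.2 j i) ∧ ¬ (∃ u, (u, i) ∈ p.2)))
          (fun p => ε p.1 i * forestWeight ε p.2)
        = csum (fun F => IsOutForest ε F ∧ F.card = k + 1 ∧
            (∀ u, (u, j) ∉ F) ∧ reachF F j i) (forestWeight ε) := by
      rw [hdrop, ← bij_add hdiag k hij]
      apply csum_congr_iff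
      intro p
      constructor
      · rintro ⟨⟨⟨⟨-, h2, h3, h4⟩, h5, h6⟩, h7⟩, h8⟩
        push_neg at h7
        exact ⟨h2, h3, h4, h5, h6, h7, h8⟩
      · rintro ⟨h2, h3, h4, h5, h6, h7, h8⟩
        exact ⟨⟨⟨⟨hposne p h8, h2, h3, h4⟩, h5, h6⟩, by push_neg; exact h7⟩, h8⟩
    -- the swap bijection
    have e6 : csum (fun p : Fin n × Finset (Fin n × Fin n) =>
          ((p.1 ≠ i ∧ (IsOutForest ε p.2 ∧ p.2.card = k ∧ (∀ u, (u, j) ∉ p.2)))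
            ∧ reachF p.2 j i ∧ ¬ reachF p.2 j p.1))
          (fun p => ε p.1 i * forestWeight ε p.2)
        = csum (fun p : Fin n × Finset (Fin n × Fin n) =>
            (((p.1 ≠ i ∧ (IsOutForest ε p.2 ∧ p.2.card = k ∧ (∀ u, (u, j) ∉ p.2)))
              ∧ reachF p.2 j p.1 ∧ ¬ reachF p.2 j i) ∧ (∃ u, (u, i) ∈ p.2)))
            (fun p => ε p.1 i * forestWeight ε p.2) := by
      rw [hdrop (fun p : Fin n × Finset (Fin n × Fin n) =>
          ((p.1 ≠ i ∧ (IsOutForest ε p.2 ∧ p.2.card = k ∧ (∀ u, (u, j) ∉ p.2)))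
            ∧ reachF p.2 j i ∧ ¬ reachF p.2 j p.1))]
      rw [show (csum (fun p : Fin n × Finset (Fin n × Fin n) =>
          ((p.1 ≠ i ∧ (IsOutForest ε p.2 ∧ p.2.card = k ∧ (∀ u, (u, j) ∉ p.2)))
            ∧ reachF p.2 j i ∧ ¬ reachF p.2 j p.1) ∧ 0 < ε p.1 i)
          (fun p => ε p.1 i * forestWeight ε p.2))
        = csum (fun p : Fin n × Finset (Fin n × Fin n) =>
          IsOutForest ε p.2 ∧ p.2.card = k ∧ (∀ u, (u, j) ∉ p.2) ∧
          reachF p.2 j i ∧ ¬ reachF p.2 j p.1 ∧ 0 < ε p.1 i)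
          (fun p => ε p.1 i * forestWeight ε p.2) from
        csum_congr_iff _ _ _ (fun p => by
          constructor
          · rintro ⟨⟨⟨-, h2, h3, h4⟩, h5, h6⟩, h7⟩
            exact ⟨h2, h3, h4, h5, h6, h7⟩
          · rintro ⟨h2, h3, h4, h5, h6, h7⟩
            exact ⟨⟨⟨hposne p h7, h2, h3, h4⟩, h5, h6⟩, h7⟩)]
      rw [bij_swap hdiag k hij]
      rw [hdrop (fun p : Fin n × Finset (Fin n × Fin n) =>
          ((p.1 ≠ i ∧ (IsOutForest ε p.2 ∧ p.2.card = k ∧ (∀ u, (u, j) ∉ p.2)))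
            ∧ reachF p.2 j p.1 ∧ ¬ reachF p.2 j i) ∧ (∃ u, (u, i) ∈ p.2))]
      apply csum_congr_iff
      intro p
      constructor
      · rintro ⟨h2, h3, h4, h5, h6, h7, h8⟩
        exact ⟨⟨⟨⟨hposne p h8, h2, h3, h4⟩, h5, h6⟩, h7⟩, h8⟩
      · rintro ⟨⟨⟨⟨-, h2, h3, h4⟩, h5, h6⟩, h7⟩, h8⟩
        exact ⟨h2, h3, h4, h5, h6, h7, h8⟩
    rw [e1, e2, e4, e5, e6]
    ring
end KeyRec

section Final
open Finset
variable {n : ℕ} {ε : Fin n → Fin n → ℝ}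

lemma forestWeight_pos {F : Finset (Fin n × Fin n)} (hF : IsOutForest ε F) :
    0 < forestWeight ε F :=
  Finset.prod_pos (fun p hp => hF.pos p hp)

lemma QMat_zero : QMat ε 0 = (1 : Matrix (Fin n) (Fin n) ℝ) := by
  ext i j
  rw [QMat_apply 0 i j, Matrix.one_apply]
  rcases eq_or_ne i j with rfl | hij
  · rw [if_pos rfl, csum]
    rw [show (@Finset.filter _ (fun F => IsOutForest ε F ∧ F.card = 0 ∧
        (∀ u, (u, i) ∉ F) ∧ reachF F i i) (fun a => Classical.propDecidable _)
          Finset.univ) = {∅} from ?_]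
    · simp [forestWeight]
    · ext F
      simp only [Finset.mem_filter, Finset.mem_univ, true_and, Finset.mem_singleton,
        Finset.card_eq_zero]
      constructor
      · rintro ⟨-, h, -⟩; exact h
      · rintro rfl
        exact ⟨IsOutForest.empty, rfl, by simp, Relation.ReflTransGen.refl⟩
  · rw [if_neg hij]
    apply csum_empty
    rintro F ⟨-, hcard, -, hreach⟩
    rw [Finset.card_eq_zero.mp hcard] at hreach
    exact hij (reach_empty hreach).symm

lemma sigmaW_zero : sigmaW ε 0 = 1 := by
  rw [sigmaW_eq_sum, csum]
  rw [show (@Finset.filter _ (fun F => IsOutForest ε F ∧ F.card = 0)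
      (fun a => Classical.propDecidable _) Finset.univ) = {∅} from ?_]
  · simp [forestWeight]
  · ext F
    simp only [Finset.mem_filter, Finset.mem_univ, true_and, Finset.mem_singleton,
      Finset.card_eq_zero]
    exact ⟨fun h => h.2, fun h => ⟨h ▸ IsOutForest.empty, h⟩⟩

lemma card_le_max {F : Finset (Fin n × Fin n)} (hF : IsOutForest ε F) :
    F.card ≤ maxForestCard ε := by
  apply le_csSup
  · exact ⟨Fintype.card (Fin n × Fin n), fun k hk => by
      obtain ⟨G, -, hc⟩ := hk
      exact hc ▸ Finset.card_le_univ G⟩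
  · exact ⟨F, hF, rfl⟩

lemma exists_max_forest :
    ∃ F : Finset (Fin n × Fin n), IsOutForest ε F ∧ F.card = maxForestCard ε := by
  have hne : {k | ∃ F : Finset (Fin n × Fin n), IsOutForest ε F ∧ F.card = k}.Nonempty :=
    ⟨0, ∅, IsOutForest.empty, Finset.card_empty⟩
  have hbdd : BddAbove {k | ∃ F : Finset (Fin n × Fin n), IsOutForest ε F ∧ F.card = k} :=
    ⟨Fintype.card (Fin n × Fin n), fun k hk => by
      obtain ⟨G, -, hc⟩ := hk
      exact hc ▸ Finset.card_le_univ G⟩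
  exact Nat.sSup_mem hne hbdd

lemma one_le_max (hdiag : ∀ i, ε i i = 0) (harc : ∃ i j : Fin n, 0 < ε i j) :
    1 ≤ maxForestCard ε := by
  obtain ⟨i, j, hij⟩ := harc
  have hne : i ≠ j := by
    intro h; rw [h, hdiag] at hij; exact lt_irrefl 0 hij
  have hF : IsOutForest ε ({(i, j)} : Finset (Fin n × Fin n)) := by
    have := IsOutForest.insert_arc (s := i) (i := j)
      (IsOutForest.empty (ε := ε)) (by simp) hij
      (fun h => hne (reach_empty h).symm)
    simpa using this
  have := card_le_max hF
  simpa using this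

lemma sigmaW_pos (k : ℕ) (hk : k ≤ maxForestCard ε) : 0 < sigmaW ε k := by
  obtain ⟨G, hG, hGc⟩ := exists_max_forest (ε := ε)
  obtain ⟨F, hFG, hFc⟩ := Finset.exists_subset_card_eq (hGc ▸ hk : k ≤ G.card)
  rw [sigmaW_eq_sum]
  exact csum_pos _ _ (fun F hF => forestWeight_pos hF.1) ⟨hG.subset hFG, hFc⟩

lemma sigmaW_top : sigmaW ε (maxForestCard ε + 1) = 0 := by
  rw [sigmaW_eq_sum]
  apply csum_empty
  rintro F ⟨hF, hcard⟩
  have := card_le_max hF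
  omega

lemma QMat_top : QMat ε (maxForestCard ε + 1) = 0 := by
  ext i j
  rw [QMat_apply, Matrix.zero_apply]
  apply csum_empty
  rintro F ⟨hF, hcard, -⟩
  have := card_le_max hF
  omega

lemma QMat_succ (hnonneg : ∀ i j, 0 ≤ ε i j) (hdiag : ∀ i, ε i i = 0) (k : ℕ) :
    QMat ε (k + 1) = sigmaW ε (k + 1) • (1 : Matrix (Fin n) (Fin n) ℝ)
      - kirchhoff ε * QMat ε k := by
  rw [keyrec hnonneg hdiag k, sub_sub_cancel]

lemma LQ_comm (hnonneg : ∀ i j, 0 ≤ ε i j) (hdiag : ∀ i, ε i i = 0) (k : ℕ) :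
    kirchhoff ε * QMat ε k = QMat ε k * kirchhoff ε := by
  induction k with
  | zero => rw [QMat_zero, mul_one, one_mul]
  | succ k ih =>
    rw [QMat_succ hnonneg hdiag k, mul_sub, sub_mul, Matrix.mul_smul, Matrix.smul_mul,
      mul_one, one_mul]
    congr 1
    rw [ih, ← mul_assoc, ← ih, mul_assoc]

lemma QmQ (hnonneg : ∀ i j, 0 ≤ ε i j) (hdiag : ∀ i, ε i i = 0)
    (h0 : kirchhoff ε * QMat ε (maxForestCard ε) = 0) (k : ℕ) :
    QMat ε (maxForestCard ε) * QMat ε k = sigmaW ε k • QMat ε (maxForestCard ε) := by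
  have hQmL : QMat ε (maxForestCard ε) * kirchhoff ε = 0 := by
    rw [← LQ_comm hnonneg hdiag, h0]
  induction k with
  | zero => rw [QMat_zero, mul_one, sigmaW_zero, one_smul]
  | succ k ih =>
    rw [QMat_succ hnonneg hdiag k, mul_sub, Matrix.mul_smul, mul_one,
      ← mul_assoc, hQmL, zero_mul, sub_zero]

end Final

/-- if the digraph has at least one arc (so `n − v ≥ 1`), then
`L^# = (σ_{n−v−1}/σ_{n−v})·(J̄_{n−v−1} − J̄)`; entrywise,
`(L^#)_{ij} = (Q_{n−v−1\,ij} − σ_{n−v−1}·J̄_{ij})/σ_{n−v}`. -/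
theorem group_inverse_via_dense_forests (n : ℕ) (hn : 1 < n) (ε : Fin n → Fin n → ℝ)
    (hnonneg : ∀ i j, 0 ≤ ε i j) (hdiag : ∀ i, ε i i = 0)
    (harc : ∃ i j : Fin n, 0 < ε i j) :
    (kirchhoff ε + Jbar ε)⁻¹ - Jbar ε
      = (sigmaW ε (maxForestCard ε - 1) / sigmaW ε (maxForestCard ε)) •
          ((sigmaW ε (maxForestCard ε - 1))⁻¹ • QMat ε (maxForestCard ε - 1) - Jbar ε) ∧
    (∀ i j : Fin n,
      ((kirchhoff ε + Jbar ε)⁻¹ - Jbar ε) i j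
        = (QMat ε (maxForestCard ε - 1) i j
            - sigmaW ε (maxForestCard ε - 1) * Jbar ε i j)
          / sigmaW ε (maxForestCard ε)) := by
  
  have hm1 : 1 ≤ maxForestCard ε := one_le_max hdiag harc
  have hσm : 0 < sigmaW ε (maxForestCard ε) := sigmaW_pos _ le_rfl
  have hσ' : 0 < sigmaW ε (maxForestCard ε - 1) := sigmaW_pos _ (Nat.sub_le _ 1)
  have hσmne : sigmaW ε (maxForestCard ε) ≠ 0 := ne_of_gt hσm
  have hσ'ne : sigmaW ε (maxForestCard ε - 1) ≠ 0 := ne_of_gt hσ'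
  have hsucc : maxForestCard ε - 1 + 1 = maxForestCard ε := Nat.succ_pred_eq_of_pos hm1
  have hLQm : kirchhoff ε * QMat ε (maxForestCard ε) = 0 := by
    rw [keyrec hnonneg hdiag (maxForestCard ε), sigmaW_top, QMat_top, zero_smul, sub_zero]
  have hLQ' : kirchhoff ε * QMat ε (maxForestCard ε - 1)
      = sigmaW ε (maxForestCard ε) • (1 : Matrix (Fin n) (Fin n) ℝ)
        - QMat ε (maxForestCard ε) := by
    have h := keyrec hnonneg hdiag (maxForestCard ε - 1)
    rw [hsucc] at h
    exact h
  have hQmQ' : QMat ε (maxForestCard ε) * QMat ε (maxForestCard ε - 1)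
      = sigmaW ε (maxForestCard ε - 1) • QMat ε (maxForestCard ε) :=
    QmQ hnonneg hdiag hLQm _
  have hQmQm : QMat ε (maxForestCard ε) * QMat ε (maxForestCard ε)
      = sigmaW ε (maxForestCard ε) • QMat ε (maxForestCard ε) :=
    QmQ hnonneg hdiag hLQm _
  set σm := sigmaW ε (maxForestCard ε) with hσmdef
  set σp := sigmaW ε (maxForestCard ε - 1) with hσpdef
  set Qm := QMat ε (maxForestCard ε) with hQmdef
  set Qp := QMat ε (maxForestCard ε - 1) with hQpdef
  set B : Matrix (Fin n) (Fin n) ℝ :=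
    (σm⁻¹ - σp / σm * σm⁻¹) • Qm + σm⁻¹ • Qp with hBdef
  have hJ : Jbar ε = σm⁻¹ • Qm := rfl
  have hinv : (kirchhoff ε + Jbar ε) * B = 1 := by
    rw [hJ, hBdef, add_mul, mul_add, mul_add, Matrix.mul_smul, Matrix.mul_smul,
      Matrix.smul_mul, Matrix.smul_mul, Matrix.mul_smul, Matrix.mul_smul,
      hLQm, hLQ', hQmQm, hQmQ']
    rw [smul_sub, smul_smul, smul_smul, smul_smul, smul_smul]
    rw [show σm⁻¹ * σm = 1 from inv_mul_cancel₀ hσmne, one_smul]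
    rw [smul_zero]
    match_scalars <;> (field_simp; try ring)
  have hBinv : (kirchhoff ε + Jbar ε)⁻¹ = B := Matrix.inv_eq_right_inv hinv
  constructor
  · ext i j
    rw [Matrix.sub_apply, hBinv, hJ, hBdef]
    simp only [Matrix.add_apply, Matrix.smul_apply, Matrix.sub_apply, smul_eq_mul]
    field_simp
    ring
  · intro i j
    rw [Matrix.sub_apply, hBinv, hJ, hBdef]
    simp only [Matrix.add_apply, Matrix.smul_apply, Matrix.sub_apply, smul_eq_mul]
    field_simp
    ring
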